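/- Let π_0,…,π_s be distinct points of ℝ, let ω(0),…,ω(s) be strictly positive reals, set w(π_x) = [[0, ω(x)],[0,0]], and fix an integer k with 1 ≤ k ≤ s. Let m be the solution of the discrete Riemann–Hilbert problem on {π_0,…,π_{s−1}} and m′ the solution on {π_0,…,π_s}, both with the jump matrices w and both satisfying m(ζ)·diag(ζ^{−k}, ζ^{k}) → I and m′(ζ)·diag(ζ^{−k}, ζ^{k}) → I as ζ → ∞. Then there exists a matrix A ∈ Mat(2,ℂ) with A² = 0 such that m′(ζ) = (I + (ζ−π_s)^{−1}A)·m(ζ) for every ζ ∈ ℂ∖{π_0,…,π_s}. -/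

import Mathlib

/-!
Near a jump point `x` a solution is `h + (ζ - x)⁻¹ • (h x * w x)` with `h` analytic, and since
`w x` is nilpotent the poles of `m' * adjugate m` (also for `m' = m`) at common points cancel. So
`m * adjugate m = det m • 1`, and `m' * adjugate m - (ζ - p)⁻¹ • A` with `A` the residue at the new
point `p`, have only removable singularities; both tend to `1` at infinity, since the factors
`diag(ζ^{-k}, ζ^k)` cancel, hence equal `1` by Liouville. Thus `det m = 1` and
`m' = (1 + (ζ - p)⁻¹ • A) * m`. Taking determinants, `det (1 + c • A) = 1` for infinitely many `c`,
which forces `trace A = det A = 0`, i.e. `A * A = 0` by Cayley–Hamilton.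
-/

open Filter Topology Matrix Polynomial

noncomputable section

/-- 2×2 complex matrices. -/
abbrev Mat2 : Type := Matrix (Fin 2) (Fin 2) ℂ

/-- Entrywise complex differentiability (= analyticity) of a matrix-valued function on a set. -/
def EntryDiffOn (m : ℂ → Mat2) (U : Set ℂ) : Prop :=
  ∀ i j, DifferentiableOn ℂ (fun ζ => m ζ i j) U

/-- `m` solves the discrete Riemann–Hilbert problem `(Z, w)`: `m` is analytic off `Z`, has at
most a simple pole at each `x ∈ Z` (i.e. `ζ ↦ (ζ - x) • m ζ` extends analytically to a
neighbourhood of `x`), and the value at `x` of this extension (the residue of `m` at `x`)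
equals the limit of `m(ζ) * w(x)` as `ζ → x`. -/
def SolvesDRHP (Z : Finset ℂ) (w : ℂ → Mat2) (m : ℂ → Mat2) : Prop :=
  EntryDiffOn m ((Z : Set ℂ))ᶜ ∧
  ∀ x ∈ Z, ∃ g : ℂ → Mat2,
    EntryDiffOn g (((Z : Set ℂ))ᶜ ∪ {x}) ∧
    (∀ ζ, ζ ∉ (Z : Set ℂ) → g ζ = (ζ - x) • m ζ) ∧
    Filter.Tendsto (fun ζ => m ζ * w x) (𝓝[≠] x) (𝓝 (g x))

/-- The asymptotic condition `m(ζ) · diag(ζ^{-k}, ζ^k) → I` as `ζ → ∞`. -/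
def AsympId (k : ℕ) (m : ℂ → Mat2) : Prop :=
  Filter.Tendsto (fun ζ : ℂ => m ζ * Matrix.diagonal ![ζ⁻¹ ^ k, ζ ^ k])
    (Bornology.cobounded ℂ) (𝓝 1)

/-- The finite set `{π 0, …, π (s-1)}` regarded as a finite subset of `ℂ`. -/
def Zset (π : ℕ → ℝ) (s : ℕ) : Finset ℂ :=
  (Finset.range s).image fun x => (π x : ℂ)

open Bornology Set

lemma Set.Finite.compl_union_singleton_mem_nhds {X : Type*} [TopologicalSpace X] [T1Space X]
    {s : Set X} (hs : s.Finite) (x : X) : sᶜ ∪ {x} ∈ 𝓝 x := by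
  rw [union_comm, ← Set.compl_sdiff]
  exact (hs.sdiff (t := {x})).isClosed.isOpen_compl.mem_nhds (by simp)

lemma Set.Finite.eventually_nhdsNE_notMem {X : Type*} [TopologicalSpace X] [T1Space X]
    {s : Set X} (hs : s.Finite) (x : X) : ∀ᶠ y in 𝓝[≠] x, y ∉ s := by
  filter_upwards [mem_nhdsWithin_of_mem_nhds (hs.compl_union_singleton_mem_nhds x),
    self_mem_nhdsWithin] with y hy (hyx : y ≠ x)
  exact hy.resolve_right hyx

theorem tendsto_add_inv_smul_nhdsNE {𝕜 E : Type*} [NontriviallyNormedField 𝕜]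
    [NormedAddCommGroup E] [NormedSpace 𝕜 E] {u v : 𝕜 → E} {x : 𝕜}
    (hu : ContinuousAt u x) (hv : DifferentiableAt 𝕜 v x) (hv₀ : v x = 0) :
    Tendsto (fun ζ => u ζ + (ζ - x)⁻¹ • v ζ) (𝓝[≠] x) (𝓝 (u x + deriv v x)) := by
  have h : Tendsto (u + dslope v x) (𝓝[≠] x) (𝓝 (u x + deriv v x)) := by
    simpa using (hu.add (continuousAt_dslope_same.2 hv)).tendsto.mono_left nhdsWithin_le_nhds
  refine h.congr' (eventually_nhdsWithin_of_forall fun ζ (hζ : ζ ≠ x) => ?_)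
  rw [Pi.add_apply, dslope_of_ne _ hζ, slope_def_module, hv₀, sub_zero]

/-- Riemann's removable singularity theorem combined with Liouville's theorem. -/
theorem Complex.eqOn_compl_of_tendsto_cobounded {E : Type*} [NormedAddCommGroup E]
    [NormedSpace ℂ E] [CompleteSpace E] {Z : Set ℂ} (hZ : Z.Finite) {f : ℂ → E}
    (hf : DifferentiableOn ℂ f Zᶜ) (hlim : ∀ x ∈ Z, ∃ L, Tendsto f (𝓝[≠] x) (𝓝 L)) {c : E}
    (hc : Tendsto f (cobounded ℂ) (𝓝 c)) : EqOn f (fun _ => c) Zᶜ := by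
  classical
  set F : ℂ → E := fun z => if z ∈ Z then limUnder (𝓝[≠] z) f else f z
  have hFf : EqOn F f Zᶜ := fun z hz => if_neg hz
  have hF_of_notMem : ∀ z ∉ Z, DifferentiableAt ℂ F z := fun z hz =>
    have hZc : Zᶜ ∈ 𝓝 z := hZ.isClosed.isOpen_compl.mem_nhds hz
    (hf.differentiableAt hZc).congr_of_eventuallyEq (eventuallyEq_of_mem hZc hFf)
  have hF : Differentiable ℂ F := by
    intro z
    by_cases hz : z ∈ Z
    · obtain ⟨L, hL⟩ := hlim z hz
      refine (Complex.analyticAt_of_differentiable_on_punctured_nhds_of_continuousAt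
        ((hZ.eventually_nhdsNE_notMem z).mono hF_of_notMem) ?_).differentiableAt
      rw [← continuousWithinAt_compl_self, ContinuousWithinAt, show F z = L from
        (if_pos hz).trans hL.limUnder_eq]
      exact hL.congr' ((hZ.eventually_nhdsNE_notMem z).mono fun y hy => (hFf hy).symm)
    · exact hF_of_notMem z hz
  intro z hz
  rw [← hFf hz]
  refine hF.apply_eq_of_tendsto_cocompact z ?_
  rw [← Metric.cobounded_eq_cocompact]
  exact hc.congr' (eventuallyEq_of_mem (isBounded_def.1 hZ.isBounded) hFf).symm

namespace EntryDiffOn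

variable {f g : ℂ → Mat2} {U V : Set ℂ}

lemma mono (hf : EntryDiffOn f U) (hVU : V ⊆ U) : EntryDiffOn f V :=
  fun i j => (hf i j).mono hVU

lemma const (A : Mat2) (U : Set ℂ) : EntryDiffOn (fun _ => A) U :=
  fun _ _ => differentiableOn_const _

lemma sub (hf : EntryDiffOn f U) (hg : EntryDiffOn g U) : EntryDiffOn (fun ζ => f ζ - g ζ) U :=
  fun i j => (hf i j).sub (hg i j)

lemma mul (hf : EntryDiffOn f U) (hg : EntryDiffOn g U) : EntryDiffOn (fun ζ => f ζ * g ζ) U :=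
  fun i j => by
    simp only [Matrix.mul_apply]
    exact DifferentiableOn.fun_sum fun l _ => (hf i l).mul (hg l j)

lemma smul {c : ℂ → ℂ} (hc : DifferentiableOn ℂ c U) (hf : EntryDiffOn f U) :
    EntryDiffOn (fun ζ => c ζ • f ζ) U :=
  fun i j => hc.mul (hf i j)

lemma adjugate (hf : EntryDiffOn f U) : EntryDiffOn (fun ζ => (f ζ).adjugate) U := by
  intro i j
  simp only [Matrix.adjugate_fin_two]
  fin_cases i <;> fin_cases j
  · exact hf 1 1
  · exact (hf 0 1).neg
  · exact (hf 1 0).neg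
  · exact hf 0 0

lemma continuousAt (hf : EntryDiffOn f U) {x : ℂ} (hU : U ∈ 𝓝 x) : ContinuousAt f x :=
  continuousAt_pi.2 fun i => continuousAt_pi.2 fun j => ((hf i j).differentiableAt hU).continuousAt

end EntryDiffOn

theorem exists_tendsto_nhdsNE_of_eventuallyEq_add_inv_smul {f u v : ℂ → Mat2} {U : Set ℂ}
    {x : ℂ} (hU : U ∈ 𝓝 x) (hu : EntryDiffOn u U) (hv : EntryDiffOn v U) (hv₀ : v x = 0)
    (hf : f =ᶠ[𝓝[≠] x] fun ζ => u ζ + (ζ - x)⁻¹ • v ζ) :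
    ∃ L, Tendsto f (𝓝[≠] x) (𝓝 L) := by
  refine ⟨Matrix.of fun i j => u x i j + deriv (v · i j) x, Tendsto.congr' hf.symm ?_⟩
  refine tendsto_pi_nhds.2 fun i => tendsto_pi_nhds.2 fun j => ?_
  exact tendsto_add_inv_smul_nhdsNE ((hu i j).differentiableAt hU).continuousAt
    ((hv i j).differentiableAt hU) (congrFun₂ hv₀ i j)

theorem eqOn_compl_of_entryDiffOn_of_tendsto_cobounded {Z : Finset ℂ} {f : ℂ → Mat2}
    (hf : EntryDiffOn f (↑Z)ᶜ) (hlim : ∀ x ∈ Z, ∃ L, Tendsto f (𝓝[≠] x) (𝓝 L)) {C : Mat2}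
    (hC : Tendsto f (cobounded ℂ) (𝓝 C)) : ∀ ζ ∉ (Z : Set ℂ), f ζ = C := by
  intro ζ hζ
  ext i j
  refine Complex.eqOn_compl_of_tendsto_cobounded Z.finite_toSet (hf i j) (fun x hx => ?_)
    ((hC.apply_nhds i).apply_nhds j) hζ
  obtain ⟨L, hL⟩ := hlim x hx
  exact ⟨L i j, (hL.apply_nhds i).apply_nhds j⟩

namespace Matrix

variable {R : Type*} [CommRing R]

theorem adjugate_fin_two_add (A B : Matrix (Fin 2) (Fin 2) R) :
    adjugate (A + B) = adjugate A + adjugate B := by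
  ext i j
  fin_cases i <;> fin_cases j <;> simp [adjugate_fin_two] <;> ring

theorem adjugate_eq_neg_of_mul_self_eq_zero [IsReduced R] {W : Matrix (Fin 2) (Fin 2) R}
    (hW : W * W = 0) : adjugate W = -W := by
  have htr : trace W = 0 := (isNilpotent_trace_of_isNilpotent ⟨2, by rwa [sq]⟩).eq_zero
  rw [trace_fin_two] at htr
  ext i j
  fin_cases i <;> fin_cases j <;> simp [adjugate_fin_two] <;> linear_combination htr

/-- The `c²` term vanishes because `W * adjugate W = -(W * W) = 0`. -/
theorem add_smul_mul_adjugate_add_smul [IsReduced R] {W : Matrix (Fin 2) (Fin 2) R}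
    (hW : W * W = 0) (A B P Q : Matrix (Fin 2) (Fin 2) R) (c : R) :
    (B + c • (Q * W)) * adjugate (A + c • (P * W)) =
      B * adjugate A + c • (Q * W * adjugate A - B * W * adjugate P) := by
  rw [adjugate_fin_two_add, adjugate_smul, adjugate_mul_distrib,
    adjugate_eq_neg_of_mul_self_eq_zero hW]
  simp only [Fintype.card_fin, Nat.reduceSub, pow_one, add_mul, mul_add, smul_mul_assoc,
    mul_smul_comm, mul_neg, neg_mul, smul_neg, mul_assoc, ← mul_assoc W W, hW, zero_mul, mul_zero,
    smul_zero, add_zero, smul_sub]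
  abel

theorem mul_self_eq_zero_of_det_one_add_smul {K : Type*} [Field K] (A : Matrix (Fin 2) (Fin 2) K)
    {c₁ c₂ : K} (hc₁ : c₁ ≠ 0) (hc₂ : c₂ ≠ 0) (hc : c₁ ≠ c₂) (h₁ : det (1 + c₁ • A) = 1)
    (h₂ : det (1 + c₂ • A) = 1) : A * A = 0 := by
  have htr_det : ∀ c : K, c ≠ 0 → det (1 + c • A) = 1 → trace A + c * det A = 0 := by
    intro c hc h
    simp only [det_fin_two, trace_fin_two, add_apply, one_apply_eq, smul_apply, smul_eq_mul,
      ne_eq, zero_ne_one, not_false_eq_true, one_apply_ne, zero_add, one_ne_zero] at h ⊢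
    apply mul_left_cancel₀ hc
    linear_combination h
  have hdet : det A = 0 := by
    have h : (c₁ - c₂) * det A = 0 := by linear_combination htr_det c₁ hc₁ h₁ - htr_det c₂ hc₂ h₂
    exact (mul_eq_zero.1 h).resolve_left (sub_ne_zero.2 hc)
  have htr : trace A = 0 := by simpa [hdet] using htr_det c₁ hc₁ h₁
  have h := aeval_self_charpoly A
  rw [charpoly_fin_two, htr, hdet] at h
  simpa [sq] using h

end Matrix

theorem AsympId.tendsto_mul_adjugate {k : ℕ} {m m' : ℂ → Mat2} (hm : AsympId k m)
    (hm' : AsympId k m') : Tendsto (fun ζ => m' ζ * adjugate (m ζ)) (cobounded ℂ) (𝓝 1) := by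
  have h : Tendsto (fun ζ => m' ζ * Matrix.diagonal ![ζ⁻¹ ^ k, ζ ^ k] *
      adjugate (m ζ * Matrix.diagonal ![ζ⁻¹ ^ k, ζ ^ k])) (cobounded ℂ) (𝓝 (1 * adjugate 1)) :=
    hm'.mul ((continuous_id.matrix_adjugate.tendsto 1).comp hm)
  rw [adjugate_one, mul_one] at h
  refine h.congr' ((eventually_ne_cobounded 0).mono fun ζ hζ => ?_)
  set D := Matrix.diagonal ![ζ⁻¹ ^ k, ζ ^ k]
  have hD : D * adjugate D = 1 := by
    rw [Matrix.mul_adjugate, Matrix.det_diagonal, Fin.prod_univ_two]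
    simp [hζ]
  simp only [adjugate_mul_distrib, mul_assoc, ← mul_assoc D, hD, one_mul]

namespace SolvesDRHP

variable {Z : Finset ℂ} {p : ℂ} {w m m' : ℂ → Mat2} {k : ℕ}

theorem exists_eq_add_inv_smul (hm : SolvesDRHP Z w m) {x : ℂ} (hx : x ∈ Z)
    (hw : w x * w x = 0) :
    ∃ h : ℂ → Mat2, EntryDiffOn h ((↑Z)ᶜ ∪ {x}) ∧
      ∀ ζ ∉ (Z : Set ℂ), m ζ = h ζ + (ζ - x)⁻¹ • (h x * w x) := by
  obtain ⟨g, hg, hgm, hlim⟩ := hm.2 x hx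
  have hU := Z.finite_toSet.compl_union_singleton_mem_nhds x
  set h : ℂ → Mat2 := fun ζ => Matrix.of fun i j => dslope (g · i j) x ζ
  have hh : EntryDiffOn h ((↑Z)ᶜ ∪ {x}) := fun i j =>
    (Complex.differentiableOn_dslope hU).2 (hg i j)
  have hmh : ∀ ζ ∉ (Z : Set ℂ), m ζ = h ζ + (ζ - x)⁻¹ • g x := by
    intro ζ hζ
    have hζx : ζ - x ≠ 0 := sub_ne_zero.2 fun hζx => hζ (hζx ▸ hx)
    ext i j
    simp only [h, Matrix.add_apply, Matrix.smul_apply, Matrix.of_apply, smul_eq_mul,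
      dslope_of_ne _ (sub_ne_zero.1 hζx), slope_def_field, hgm ζ hζ]
    field_simp
    ring
  have hoff : ∀ᶠ ζ in 𝓝[≠] x, ζ ∉ (Z : Set ℂ) := Z.finite_toSet.eventually_nhdsNE_notMem x
  -- The residue `g x = lim m * w x` is annihilated by `w x`, so `m * w x` has no pole.
  have hgw : g x * w x = 0 := by
    refine tendsto_nhds_unique (hlim.mul_const (w x)) (tendsto_const_nhds.congr' ?_)
    exact Eventually.of_forall fun ζ => by simp [mul_assoc, hw]
  have hgx : g x = h x * w x := by
    refine tendsto_nhds_unique hlim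
      ((((hh.continuousAt hU).tendsto.mono_left nhdsWithin_le_nhds).mul_const (w x)).congr' ?_)
    filter_upwards [hoff] with ζ hζ
    rw [hmh ζ hζ, add_mul, smul_mul_assoc, hgw, smul_zero, add_zero]
  exact ⟨h, hh, fun ζ hζ => hgx ▸ hmh ζ hζ⟩

theorem exists_tendsto_mul_adjugate {Z' : Finset ℂ} (hm : SolvesDRHP Z w m)
    (hm' : SolvesDRHP Z' w m') {x : ℂ} (hx : x ∈ Z) (hx' : x ∈ Z') (hw : w x * w x = 0) :
    ∃ L, Tendsto (fun ζ => m' ζ * adjugate (m ζ)) (𝓝[≠] x) (𝓝 L) := by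
  obtain ⟨h, hh, hmh⟩ := hm.exists_eq_add_inv_smul hx hw
  obtain ⟨h', hh', hmh'⟩ := hm'.exists_eq_add_inv_smul hx' hw
  set U : Set ℂ := ((↑Z : Set ℂ)ᶜ ∪ {x}) ∩ ((↑Z' : Set ℂ)ᶜ ∪ {x})
  have hU : U ∈ 𝓝 x :=
    inter_mem (Z.finite_toSet.compl_union_singleton_mem_nhds x)
      (Z'.finite_toSet.compl_union_singleton_mem_nhds x)
  have hhU : EntryDiffOn h U := hh.mono inter_subset_left
  have hhU' : EntryDiffOn h' U := hh'.mono inter_subset_right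
  refine exists_tendsto_nhdsNE_of_eventuallyEq_add_inv_smul hU (hhU'.mul hhU.adjugate)
    (v := fun ζ => h' x * w x * adjugate (h ζ) - h' ζ * w x * adjugate (h x))
    ((((EntryDiffOn.const _ _).mul (EntryDiffOn.const _ _)).mul hhU.adjugate).sub
      ((hhU'.mul (EntryDiffOn.const _ _)).mul (EntryDiffOn.const _ _))) (sub_self _) ?_
  filter_upwards [Z.finite_toSet.eventually_nhdsNE_notMem x,
    Z'.finite_toSet.eventually_nhdsNE_notMem x] with ζ hζ hζ'
  rw [hmh ζ hζ, hmh' ζ hζ', Matrix.add_smul_mul_adjugate_add_smul hw]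

theorem det_eq_one (hm : SolvesDRHP Z w m) (hma : AsympId k m)
    (hw : ∀ x ∈ Z, w x * w x = 0) : ∀ ζ ∉ (Z : Set ℂ), (m ζ).det = 1 := by
  intro ζ hζ
  have h := eqOn_compl_of_entryDiffOn_of_tendsto_cobounded (hm.1.mul hm.1.adjugate)
    (fun x hx => hm.exists_tendsto_mul_adjugate hm hx hx (hw x hx))
    (hma.tendsto_mul_adjugate hma) ζ hζ
  simpa [Matrix.mul_adjugate] using congrFun₂ h 0 0


theorem exists_mul_adjugate_eq_one_add_inv_smul (hp : p ∉ Z) (hw : ∀ x ∈ Z, w x * w x = 0)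
    (hm : SolvesDRHP Z w m) (hma : AsympId k m) (hm' : SolvesDRHP (insert p Z) w m')
    (hm'a : AsympId k m') :
    ∃ A : Mat2, ∀ ζ ∉ (↑(insert p Z) : Set ℂ), m' ζ * adjugate (m ζ) = 1 + (ζ - p)⁻¹ • A := by
  obtain ⟨g, hg, hgm', -⟩ := hm'.2 p (Finset.mem_insert_self p Z)
  have hZp : (↑Z : Set ℂ)ᶜ ⊆ (↑(insert p Z) : Set ℂ)ᶜ ∪ {p} := by
    intro ζ hζ
    by_cases hζp : ζ = p
    · exact Or.inr hζp
    · exact Or.inl (by simpa [hζp] using hζ)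
  have hsub : (↑(insert p Z) : Set ℂ)ᶜ ⊆ (↑Z : Set ℂ)ᶜ ∩ {p}ᶜ := by
    intro ζ hζ
    simpa [not_or, and_comm] using hζ
  -- `A` is the residue of `m' * adjugate m` at `p`.
  set A := g p * adjugate (m p)
  have hpole : EntryDiffOn (fun ζ => (ζ - p)⁻¹ • A) {p}ᶜ :=
    EntryDiffOn.smul ((differentiableOn_id.sub_const p).inv fun ζ hζ => sub_ne_zero.2 hζ)
      (EntryDiffOn.const A _)
  suffices h : ∀ ζ ∉ (↑(insert p Z) : Set ℂ), m' ζ * adjugate (m ζ) - (ζ - p)⁻¹ • A = 1 from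
    ⟨A, fun ζ hζ => by rw [← h ζ hζ, sub_add_cancel]⟩
  refine eqOn_compl_of_entryDiffOn_of_tendsto_cobounded
    ((hm'.1.mul (hm.1.mono fun ζ hζ => (hsub hζ).1).adjugate).sub
      (hpole.mono fun ζ hζ => (hsub hζ).2)) (fun x hx => ?_) ?_
  · rcases Finset.mem_insert.1 hx with rfl | hxZ
    · refine exists_tendsto_nhdsNE_of_eventuallyEq_add_inv_smul
        (Z.finite_toSet.isClosed.isOpen_compl.mem_nhds hp) (EntryDiffOn.const 0 _)
        (v := fun ζ => g ζ * adjugate (m ζ) - A)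
        (((hg.mono hZp).mul hm.1.adjugate).sub (EntryDiffOn.const A _)) (sub_self _) ?_
      filter_upwards [(insert x Z).finite_toSet.eventually_nhdsNE_notMem x,
        self_mem_nhdsWithin] with ζ hζ (hζx : ζ ≠ x)
      rw [hgm' ζ hζ, smul_mul_assoc, smul_sub, smul_smul,
        inv_mul_cancel₀ (sub_ne_zero.2 hζx), one_smul, zero_add]
    · obtain ⟨L, hL⟩ := hm.exists_tendsto_mul_adjugate hm' hxZ hx (hw x hxZ)
      have hxp : x ≠ p := fun hxp => hp (hxp ▸ hxZ)
      exact ⟨L - (x - p)⁻¹ • A, hL.sub <| ((hpole.continuousAt (isOpen_ne.mem_nhds hxp)).tendsto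
        ).mono_left nhdsWithin_le_nhds⟩
  · simpa using (hma.tendsto_mul_adjugate hm'a).sub
      ((tendsto_inv₀_cobounded.comp (tendsto_sub_const_cobounded p)).smul_const A)

theorem exists_eq_one_add_inv_smul_mul (hp : p ∉ Z) (hw : ∀ x ∈ insert p Z, w x * w x = 0)
    (hm : SolvesDRHP Z w m) (hma : AsympId k m) (hm' : SolvesDRHP (insert p Z) w m')
    (hm'a : AsympId k m') :
    ∃ A : Mat2, A * A = 0 ∧
      ∀ ζ ∉ (↑(insert p Z) : Set ℂ), m' ζ = (1 + (ζ - p)⁻¹ • A) * m ζ := by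
  have hwZ : ∀ x ∈ Z, w x * w x = 0 := fun x hx => hw x (Finset.mem_insert_of_mem hx)
  obtain ⟨A, hA⟩ := exists_mul_adjugate_eq_one_add_inv_smul hp hwZ hm hma hm' hm'a
  have hdet := hm.det_eq_one hma hwZ
  have hdet' := hm'.det_eq_one hm'a hw
  have hZ : ∀ {ζ}, ζ ∉ (↑(insert p Z) : Set ℂ) → ζ ∉ (↑Z : Set ℂ) := fun hζ hζZ =>
    hζ (Finset.mem_insert_of_mem hζZ)
  have hfactor : ∀ ζ ∉ (↑(insert p Z) : Set ℂ), m' ζ = (1 + (ζ - p)⁻¹ • A) * m ζ := by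
    intro ζ hζ
    rw [← hA ζ hζ, mul_assoc, adjugate_mul, hdet ζ (hZ hζ), one_smul, mul_one]
  have hdetA : ∀ ζ ∉ (↑(insert p Z) : Set ℂ), det (1 + (ζ - p)⁻¹ • A) = 1 := by
    intro ζ hζ
    simpa [hdet ζ (hZ hζ), hdet' ζ hζ] using (congrArg det (hfactor ζ hζ)).symm
  obtain ⟨ζ₁, hζ₁⟩ := Infinite.exists_notMem_finset (insert p Z)
  obtain ⟨ζ₂, hζ₂⟩ := Infinite.exists_notMem_finset (insert ζ₁ (insert p Z))
  rw [Finset.mem_insert, not_or] at hζ₂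
  have hne : ∀ {ζ}, ζ ∉ insert p Z → (ζ - p)⁻¹ ≠ 0 := fun hζ =>
    inv_ne_zero (sub_ne_zero.2 fun hζp => hζ (hζp ▸ Finset.mem_insert_self p Z))
  refine ⟨A, A.mul_self_eq_zero_of_det_one_add_smul (hne hζ₁) (hne hζ₂.2) ?_ (hdetA ζ₁ hζ₁)
    (hdetA ζ₂ hζ₂.2), hfactor⟩
  rw [Ne, _root_.inv_inj, sub_left_inj]
  exact Ne.symm hζ₂.1

end SolvesDRHP

theorem stmt2_general (s k : ℕ)
    (π ω : ℕ → ℝ)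
    (hπ : ∀ i ≤ s, ∀ j ≤ s, π i = π j → i = j)
    (w : ℂ → Mat2) (hw : ∀ x ≤ s, w (π x : ℂ) = !![0, (ω x : ℂ); 0, 0])
    (m m' : ℂ → Mat2)
    (hm : SolvesDRHP (Zset π s) w m) (hma : AsympId k m)
    (hm' : SolvesDRHP (Zset π (s + 1)) w m') (hm'a : AsympId k m') :
    ∃ A : Mat2, A * A = 0 ∧
      ∀ ζ : ℂ, ζ ∉ (Zset π (s + 1) : Set ℂ) →
        m' ζ = (1 + (ζ - (π s : ℂ))⁻¹ • A) * m ζ := by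
  have hZ : Zset π (s + 1) = insert (π s : ℂ) (Zset π s) := by
    rw [Zset, Zset, Finset.range_add_one, Finset.image_insert]
  have hp : (π s : ℂ) ∉ Zset π s := by
    simp only [Zset, Finset.mem_image, Finset.mem_range, Complex.ofReal_inj, not_exists, not_and]
    exact fun i hi hπi => hi.ne (hπ i hi.le s le_rfl hπi)
  have hw' : ∀ x ∈ Zset π (s + 1), w x * w x = 0 := by
    simp only [Zset, Finset.mem_image, Finset.mem_range, forall_exists_index, and_imp]
    rintro _ i hi rfl
    rw [hw i (Nat.lt_succ_iff.1 hi), Matrix.mul_fin_two, Matrix.eta_fin_two 0]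
    simp
  rw [hZ] at hm' hw' ⊢
  exact hm.exists_eq_one_add_inv_smul_mul hp hw' hma hm' hm'a

/-- the first equation of the Lax pair. -/
theorem stmt2 (s k : ℕ) (hk1 : 1 ≤ k) (hks : k ≤ s)
    (π ω : ℕ → ℝ)
    (hπ : ∀ i ≤ s, ∀ j ≤ s, π i = π j → i = j)
    (hω : ∀ x ≤ s, 0 < ω x)
    (w : ℂ → Mat2) (hw : ∀ x ≤ s, w (π x : ℂ) = !![0, (ω x : ℂ); 0, 0])
    (m m' : ℂ → Mat2)
    (hm : SolvesDRHP (Zset π s) w m) (hma : AsympId k m)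
    (hm' : SolvesDRHP (Zset π (s + 1)) w m') (hm'a : AsympId k m') :
    ∃ A : Mat2, A * A = 0 ∧
      ∀ ζ : ℂ, ζ ∉ (Zset π (s + 1) : Set ℂ) →
        m' ζ = (1 + (ζ - (π s : ℂ))⁻¹ • A) * m ζ :=
  stmt2_general s k π ω hπ w hw m m' hm hma hm' hm'a
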